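/- For all α', β' > 0, S(f) − S(f^{(u)}) > 0, where S(f) = (7+12β'+12α')·((1−2β')/3·(1−β'−(3/4)α')²+1) (supervised case, (9/8)α'>β') or (7+12β'+12α')·((2−3α')/8·(1−β'−(3/4)α')²+1) ((9/8)α'<β'), and S(f^{(u)}) is the analogous separability computed from the self-supervised eigendecomposition: i.e., adding ID label information strictly increases ID–semantic-OOD separability in the toy model (for parameters in the valid range α', β' ∈ (0, small)). -/
import Mathlib


/-- Adding ID label information strictly increases the ID–semantic-OOD separability
in the toy model: for all `0 < α', β' < 1/8`, `S(f) > S(f^{(u)})`, where `S(f)` is the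
supervised closed-form separability (piecewise in the regimes `(9/8)α' ≷ β'`) and
`S(f^{(u)})` the analogous self-supervised one (piecewise in `α' ≷ β'`). -/
theorem stmt10 (a b : ℝ) (ha0 : 0 < a) (ha : a < 1/8) (hb0 : 0 < b) (hb : b < 1/8) :
    (if (9/8)*a > b
      then (7 + 12*b + 12*a) * ((1 - 2*b)/3 * (1 - b - (3/4)*a)^2 + 1)
      else (7 + 12*b + 12*a) * ((2 - 3*a)/8 * (1 - b - (3/4)*a)^2 + 1))
    >
    (if a > b
      then (5 + 8*b + 8*a) * ((1 - 2*b)/2 * (1 - b - a)^2 + 1)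
      else (5 + 8*b + 8*a) * ((1 - 2*a)/2 * (1 - b - a)^2 + 1)) := by
  split_ifs with h1 h2 h3 <;>
    nlinarith [sq_nonneg a, sq_nonneg b, sq_nonneg (a-b), sq_nonneg (a+b), sq_nonneg (a*b), mul_pos ha0 hb0, sq_nonneg (1-b-a), mul_pos (mul_pos ha0 hb0) hb0, mul_pos (mul_pos ha0 hb0) ha0, mul_pos (mul_pos ha0 ha0) ha0, mul_pos (mul_pos hb0 hb0) hb0]
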